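/- Euler characteristic of a smooth complete intersection: Let $Y$ be a smooth complex projective variety of dimension $N+1$ with an ample line bundle $\mathcal{O}(1)$, $\eta = c_1(\mathcal{O}(1))$. If $X \subseteq Y$ is a smooth complete intersection of hypersurfaces of degrees $d_1, \dots, d_r$ (i.e. of divisors in $|\mathcal{O}(d_i)|$), then $\chi(X) = \left(\prod_{i=1}^r d_i\right) \sum_{i=0}^{k} Q_i(d_1,\dots,d_r) \int_Y \eta^{N+1-i} c_i(T_Y)$, where $k = N+1-r = \dim X$ and $Q_i(d_1,\dots,d_r)$ is the coefficient of $t^{k-i}$ in $\prod_{j=1}^r (1+d_j t)^{-1}$. -/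

import Mathlib

/-!
By adjunction `c(T_X) = j^* (c(T_Y) · ∏ⱼ (1 + dⱼ η)⁻¹)`, where the inverse is the power series
`∏ⱼ (1 + dⱼ t)⁻¹` evaluated at the nilpotent class `η`. The projection formula turns `∫_X c(T_X)`
into `(∏ dⱼ) ∫_Y η^r c(T_Y) ∏ⱼ (1 + dⱼ η)⁻¹`, and only the terms of total degree `N + 1` survive
integration: the term `cᵢ(T_Y)` pairs with the coefficient of `η^(k-i)`.
-/

open PowerSeries Finset

namespace PowerSeries

variable {K A : Type*} [CommRing K] [Ring A] [Algebra K A] {η : A} {n : ℕ}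

lemma aeval_eq_of_coeff_eq_of_pow_eq_zero (hη : η ^ n = 0) {p q : Polynomial K}
    (h : ∀ j < n, p.coeff j = q.coeff j) :
    Polynomial.aeval η p = Polynomial.aeval η q := by
  obtain ⟨s, hs⟩ : Polynomial.X ^ n ∣ p - q :=
    Polynomial.X_pow_dvd_iff.mpr fun j hj => by rw [Polynomial.coeff_sub, h j hj, sub_self]
  rw [← sub_eq_zero, ← map_sub, hs, map_mul, map_pow, Polynomial.aeval_X, hη, zero_mul]

lemma aeval_trunc_coe_of_pow_eq_zero (hη : η ^ n = 0) (p : Polynomial K) :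
    Polynomial.aeval η (trunc n (p : K⟦X⟧)) = Polynomial.aeval η p :=
  aeval_eq_of_coeff_eq_of_pow_eq_zero hη fun j hj => by
    rw [coeff_trunc, if_pos hj, Polynomial.coeff_coe]

/-- Since `η ^ n = 0`, evaluating the truncation below degree `n` is multiplicative. -/
noncomputable def evalNilpotent (hη : η ^ n = 0) : K⟦X⟧ →ₐ[K] A where
  toFun f := Polynomial.aeval η (trunc n f)
  map_one' := by
    rw [← Polynomial.coe_one, aeval_trunc_coe_of_pow_eq_zero hη, map_one]
  map_mul' f g := by
    rw [← map_mul]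
    exact aeval_eq_of_coeff_eq_of_pow_eq_zero hη fun j hj => by
      rw [coeff_trunc, if_pos hj, ← Polynomial.coeff_coe, Polynomial.coe_mul]
      exact coeff_mul_eq_coeff_trunc_mul_trunc f g hj
  map_zero' := by simp
  map_add' f g := by simp
  commutes' a := by
    rw [algebraMap_eq, ← Polynomial.coe_C, aeval_trunc_coe_of_pow_eq_zero hη, Polynomial.aeval_C]

@[simp]
lemma evalNilpotent_X (hη : η ^ n = 0) : evalNilpotent (K := K) hη X = η := by
  change Polynomial.aeval η (trunc n X) = η
  rw [← Polynomial.coe_X, aeval_trunc_coe_of_pow_eq_zero hη, Polynomial.aeval_X]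

lemma evalNilpotent_eq_sum (hη : η ^ (n + 1) = 0) (f : K⟦X⟧) :
    evalNilpotent hη f = ∑ m ∈ range (n + 1), coeff m f • η ^ m := by
  change Polynomial.aeval η (trunc (n + 1) f) = _
  rw [Polynomial.aeval_eq_sum_range' (natDegree_trunc_lt f n)]
  exact sum_congr rfl fun m hm => by rw [coeff_trunc, if_pos (mem_range.mp hm)]

end PowerSeries

section TopDegree

variable {K R : Type*} [CommRing K] [CommRing R] [Algebra K R]
  (intY : R →ₗ[K] K) (η : R) (cY : ℕ → R) {D : ℕ}

lemma integral_pow_mul_sum_eq (hgrade : ∀ m i : ℕ, m + i ≠ D → intY (η ^ m * cY i) = 0)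
    {a : ℕ} (ha : a ≤ D) :
    intY (η ^ a * ∑ i ∈ range (D + 1), cY i) = intY (η ^ a * cY (D - a)) := by
  rw [mul_sum, map_sum]
  refine sum_eq_single_of_mem _ (mem_range.mpr (by omega)) fun i _ hi => hgrade a i ?_
  omega

lemma integral_pow_mul_sum_mul_evalNilpotent
    (hgrade : ∀ m i : ℕ, m + i ≠ D → intY (η ^ m * cY i) = 0) (hη : η ^ (D + 1) = 0)
    {r : ℕ} (hrD : r ≤ D) (g : K⟦X⟧) :
    intY (η ^ r * ((∑ i ∈ range (D + 1), cY i) * evalNilpotent hη g)) =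
      ∑ i ∈ range (D - r + 1), coeff (D - r - i) g * intY (η ^ (D - i) * cY i) := by
  set c := ∑ i ∈ range (D + 1), cY i
  have hexpand : intY (η ^ r * (c * evalNilpotent hη g)) =
      ∑ m ∈ range (D + 1), coeff m g * intY (η ^ (r + m) * c) := by
    rw [evalNilpotent_eq_sum, mul_sum, mul_sum, map_sum]
    refine sum_congr rfl fun m _ => ?_
    rw [mul_smul_comm, mul_smul_comm, map_smul, smul_eq_mul, pow_add]
    congr 2
    ring
  have htrunc : ∑ m ∈ range (D + 1), coeff m g * intY (η ^ (r + m) * c) =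
      ∑ m ∈ range (D - r + 1), coeff m g * intY (η ^ (r + m) * c) := by
    refine (sum_subset (range_subset_range.mpr (by omega)) fun m _ hm => ?_).symm
    rw [mem_range, not_lt] at hm
    rw [show r + m = (D + 1) + (r + m - (D + 1)) by omega, pow_add, hη]
    simp
  rw [hexpand, htrunc, ← sum_range_reflect]
  refine sum_congr rfl fun i hi => ?_
  have hi : i ≤ D - r := Nat.lt_succ_iff.mp (mem_range.mp hi)
  rw [integral_pow_mul_sum_eq intY η cY hgrade (by omega),
    show r + (D - r + 1 - 1 - i) = D - i by omega, show D - (D - i) = i by omega,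
    show D - r + 1 - 1 - i = D - r - i by omega]

end TopDegree

theorem stmt17_general {R S : Type*} [CommRing R] [Algebra ℝ R] [CommRing S] [Algebra ℝ S]
    (N r k : ℕ) (hrN : r ≤ N + 1) (hk : k = N + 1 - r)
    (d : Fin r → ℕ)
    (η : R) (hη : η ^ (N + 2) = 0)
    (cY : ℕ → R)
    (intY : R →ₗ[ℝ] ℝ) (intX : S →ₗ[ℝ] ℝ)
    (jpull : R →ₐ[ℝ] S)
    (hgrade : ∀ m i : ℕ, m + i ≠ N + 1 → intY (η ^ m * cY i) = 0)
    (cTX : S)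
    (hadj : cTX * jpull (∏ j : Fin r, (1 + algebraMap ℝ R (d j : ℝ) * η)) =
      jpull (∑ i ∈ Finset.range (N + 2), cY i))
    (hproj : ∀ a : R, intX (jpull a) = (∏ j : Fin r, (d j : ℝ)) * intY (η ^ r * a)) :
    intX cTX = (∏ j : Fin r, (d j : ℝ)) *
      ∑ i ∈ Finset.range (k + 1),
        (PowerSeries.coeff (R := ℝ) (k - i)
            ((∏ j : Fin r, (1 + PowerSeries.C (R := ℝ) (d j : ℝ) * PowerSeries.X))⁻¹)) *
          intY (η ^ (N + 1 - i) * cY i) := by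
  subst hk
  set F : ℝ⟦X⟧ := ∏ j : Fin r, (1 + C (d j : ℝ) * X)
  set P : R := ∏ j : Fin r, (1 + algebraMap ℝ R (d j : ℝ) * η)
  have hF : constantCoeff F ≠ 0 := by simp [F, map_prod]
  have hFP : evalNilpotent hη F = P := by simp [F, P, map_prod]
  have hinv : jpull (evalNilpotent hη F⁻¹) * jpull P = 1 := by
    rw [← hFP, ← map_mul, ← map_mul, PowerSeries.inv_mul_cancel F hF, map_one, map_one]
  have hcTX : cTX = jpull ((∑ i ∈ range (N + 2), cY i) * evalNilpotent hη F⁻¹) := by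
    rw [map_mul]
    linear_combination jpull (evalNilpotent hη F⁻¹) * hadj - cTX * hinv
  rw [hcTX, hproj, integral_pow_mul_sum_mul_evalNilpotent intY η cY hgrade hη hrN]

/-- Euler characteristic of a smooth complete intersection, formalized
as an identity of Chern numbers in the cohomology (or Chow) ring. Here `R` is the
cohomology ring of `Y`, `S` that of `X`, `jpull` the pullback, `intY`/`intX` the
integration functionals, `η = c₁(O(1))` (nilpotent of order `N+2`), `cY i = cᵢ(T_Y)`
(with `intY` vanishing off the top degree `N+1`), `cTX = c(T_X)` determined by the
adjunction formula, and `hproj` the projection formula for the complete intersection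
of degrees `d₁, …, d_r`. The conclusion computes
`χ(X) = (∏ dᵢ) ∑ᵢ Qᵢ(d₁,…,d_r) ∫_Y η^(N+1-i) cᵢ(T_Y)`, where `Qᵢ` is the coefficient
of `t^(k-i)` in `∏ (1 + dⱼ t)⁻¹` and `k = N+1-r = dim X`. -/
theorem stmt17 {R S : Type*} [CommRing R] [Algebra ℝ R] [CommRing S] [Algebra ℝ S]
    (N r k : ℕ) (hr : 1 ≤ r) (hrN : r ≤ N + 1) (hk : k = N + 1 - r)
    (d : Fin r → ℕ) (hd : ∀ j, 0 < d j)
    (η : R) (hη : η ^ (N + 2) = 0)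
    (cY : ℕ → R)
    (intY : R →ₗ[ℝ] ℝ) (intX : S →ₗ[ℝ] ℝ)
    (jpull : R →ₐ[ℝ] S)
    (hgrade : ∀ m i : ℕ, m + i ≠ N + 1 → intY (η ^ m * cY i) = 0)
    (cTX : S)
    (hadj : cTX * jpull (∏ j : Fin r, (1 + algebraMap ℝ R (d j : ℝ) * η)) =
      jpull (∑ i ∈ Finset.range (N + 2), cY i))
    (hproj : ∀ a : R, intX (jpull a) = (∏ j : Fin r, (d j : ℝ)) * intY (η ^ r * a)) :
    intX cTX = (∏ j : Fin r, (d j : ℝ)) *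
      ∑ i ∈ Finset.range (k + 1),
        (PowerSeries.coeff (R := ℝ) (k - i)
            ((∏ j : Fin r, (1 + PowerSeries.C (R := ℝ) (d j : ℝ) * PowerSeries.X))⁻¹)) *
          intY (η ^ (N + 1 - i) * cY i) :=
  stmt17_general N r k hrN hk d η hη cY intY intX jpull hgrade cTX hadj hproj
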